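/- The function Ω is (Fréchet) differentiable at the Fermi points, and its derivative at k_F^± is the ℝ-linear map k' = (k₁', k₂') ↦ (3/2)(i k₁' ± k₂') from ℝ² to ℂ; consequently, for each sign ± there exist constants C > 0 and ε > 0 such that |Ω(k_F^± + k') − (3/2)(i k₁' ± k₂')| ≤ C |k'|² whenever |k'| ≤ ε. In other words, the dispersion of graphene is asymptotically relativistic (linear) near the Fermi points. -/

import Mathlib

open Real Complex

/-- The dot product of two vectors in `ℝ²`. -/
noncomputable def dot (k l : EuclideanSpace ℝ (Fin 2)) : ℝ := k 0 * l 0 + k 1 * l 1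

/-- First basis vector of the triangular lattice. -/
noncomputable def ell1 : EuclideanSpace ℝ (Fin 2) := !₂[3/2, -Real.sqrt 3 / 2]

/-- Second basis vector of the triangular lattice. -/
noncomputable def ell2 : EuclideanSpace ℝ (Fin 2) := !₂[3/2, Real.sqrt 3 / 2]

/-- The function `Ω(k) = 1 + e^{-i k·ℓ₁} + e^{-i k·ℓ₂}`. -/
noncomputable def Omega (k : EuclideanSpace ℝ (Fin 2)) : ℂ :=
  1 + Complex.exp (-Complex.I * (dot k ell1)) + Complex.exp (-Complex.I * (dot k ell2))

/-- The Fermi points `k_F^±`, parametrized by the sign `s = ±1`. -/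
noncomputable def kF (s : ℝ) : EuclideanSpace ℝ (Fin 2) :=
  !₂[2 * π / 3, s * (2 * π / (3 * Real.sqrt 3))]

/-!
At `k_F^±` the phases `e^{-i k_F·ℓ₁}`, `e^{-i k_F·ℓ₂}` are the two primitive cube roots of unity
`-1/2 ∓ i√3/2` and `-1/2 ± i√3/2`. They sum to `-1`, so `Ω(k_F) = 0`, and `Ω(k_F + k')` minus the
linear map is the combination, with these unimodular coefficients, of the Taylor remainders
`e^{-it} - 1 + it` at `t = k'·ℓⱼ`. Each is at most `t² ≤ |ℓⱼ|²|k'|² = 3|k'|²`, and a remainder bound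
quadratic in `|k'|` yields the Fréchet derivative.
-/

theorem hasFDerivAt_of_norm_sub_le_mul_sq {𝕜 E F : Type*} [NontriviallyNormedField 𝕜]
    [NormedAddCommGroup E] [NormedSpace 𝕜 E] [NormedAddCommGroup F] [NormedSpace 𝕜 F]
    {f : E → F} {f' : E →L[𝕜] F} {x : E} {C ε : ℝ} (hε : 0 < ε)
    (hf : ∀ h, ‖h‖ ≤ ε → ‖f (x + h) - f x - f' h‖ ≤ C * ‖h‖ ^ 2) :
    HasFDerivAt f f' x := by
  rw [hasFDerivAt_iff_isLittleO_nhds_zero]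
  refine Asymptotics.IsBigO.trans_isLittleO ?_ (Asymptotics.isLittleO_norm_pow_id one_lt_two)
  refine Asymptotics.IsBigO.of_bound C ?_
  filter_upwards [Metric.closedBall_mem_nhds (0 : E) hε] with h hh
  rw [mem_closedBall_zero_iff] at hh
  simpa using hf h hh

theorem norm_exp_neg_I_mul_sub_one_add_I_mul_le {t : ℝ} (ht : |t| ≤ 1) :
    ‖cexp (-I * t) - 1 + I * t‖ ≤ t ^ 2 := by
  have hnorm : ‖-I * t‖ = |t| := by simp
  have := norm_exp_sub_one_sub_id_le (hnorm.trans_le ht)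
  rw [hnorm, sq_abs] at this
  convert this using 2
  ring

theorem dot_eq_inner (k l : EuclideanSpace ℝ (Fin 2)) : dot k l = inner ℝ k l := by
  simp [dot, PiLp.inner_apply, Fin.sum_univ_two, mul_comm]

theorem abs_dot_le (k l : EuclideanSpace ℝ (Fin 2)) : |dot k l| ≤ ‖k‖ * ‖l‖ :=
  dot_eq_inner k l ▸ abs_real_inner_le_norm k l

theorem norm_ell1 : ‖ell1‖ = √3 := by
  rw [EuclideanSpace.norm_eq, Fin.sum_univ_two]
  congr 1
  simp [ell1, div_pow]
  norm_num

theorem norm_ell2 : ‖ell2‖ = √3 := by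
  rw [EuclideanSpace.norm_eq, Fin.sum_univ_two]
  congr 1
  simp [ell2, div_pow]
  norm_num

theorem dot_add_left (k k' l : EuclideanSpace ℝ (Fin 2)) :
    dot (k + k') l = dot k l + dot k' l := by
  simp only [dot, PiLp.add_apply]; ring

theorem dot_ell1 (k : EuclideanSpace ℝ (Fin 2)) : dot k ell1 = 3/2 * k 0 - √3/2 * k 1 := by
  simp [dot, ell1]; ring

theorem dot_ell2 (k : EuclideanSpace ℝ (Fin 2)) : dot k ell2 = 3/2 * k 0 + √3/2 * k 1 := by
  simp [dot, ell2]; ring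

theorem dot_kF_ell1 (s : ℝ) : dot (kF s) ell1 = π - s * π / 3 := by
  have : √3 ≠ 0 := by positivity
  simp [dot_ell1, kF]
  field_simp

theorem dot_kF_ell2 (s : ℝ) : dot (kF s) ell2 = dot (kF (-s)) ell1 := by
  simp [dot_ell1, dot_ell2, kF]

theorem exp_neg_I_mul_dot_kF_ell1 {s : ℝ} (hs : s = 1 ∨ s = -1) :
    cexp (-I * dot (kF s) ell1) = -1/2 - s * (√3 / 2) * I := by
  rw [dot_kF_ell1, show -I * ((π - s * π / 3 : ℝ) : ℂ) = ((s * π / 3 - π : ℝ) : ℂ) * I by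
    push_cast; ring, exp_mul_I, ← ofReal_cos, ← ofReal_sin, Real.cos_sub_pi, Real.sin_sub_pi]
  rcases hs with rfl | rfl
  · simp [cos_pi_div_three, sin_pi_div_three]; ring
  · simp [neg_div, cos_pi_div_three, sin_pi_div_three]

theorem exp_neg_I_mul_dot_kF_ell2 {s : ℝ} (hs : s = 1 ∨ s = -1) :
    cexp (-I * dot (kF s) ell2) = -1/2 + s * (√3 / 2) * I := by
  have hs' : -s = 1 ∨ -s = -1 := by rcases hs with rfl | rfl <;> simp
  rw [dot_kF_ell2, exp_neg_I_mul_dot_kF_ell1 hs']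
  push_cast; ring

theorem Omega_kF_add {s : ℝ} (hs : s = 1 ∨ s = -1) (k : EuclideanSpace ℝ (Fin 2)) :
    Omega (kF s + k) = 1 + (-1/2 - s * (√3 / 2) * I) * cexp (-I * dot k ell1)
      + (-1/2 + s * (√3 / 2) * I) * cexp (-I * dot k ell2) := by
  simp only [Omega, dot_add_left, ofReal_add, mul_add, Complex.exp_add,
    exp_neg_I_mul_dot_kF_ell1 hs, exp_neg_I_mul_dot_kF_ell2 hs]

theorem Omega_kF {s : ℝ} (hs : s = 1 ∨ s = -1) : Omega (kF s) = 0 := by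
  rw [← add_zero (kF s), Omega_kF_add hs]
  simp only [dot, PiLp.zero_apply, zero_mul, add_zero, ofReal_zero, mul_zero, Complex.exp_zero]
  ring

theorem Omega_kF_add_sub {s : ℝ} (hs : s = 1 ∨ s = -1) (k : EuclideanSpace ℝ (Fin 2)) :
    Omega (kF s + k) - (3/2 : ℂ) * (I * (k 0 : ℝ) + (s : ℝ) * (k 1 : ℝ))
      = (-1/2 - s * (√3 / 2) * I) * (cexp (-I * dot k ell1) - 1 + I * dot k ell1)
        + (-1/2 + s * (√3 / 2) * I) * (cexp (-I * dot k ell2) - 1 + I * dot k ell2) := by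
  have h3 : (√3 : ℂ) ^ 2 = 3 := by norm_cast; simp
  rw [Omega_kF_add hs]
  push_cast [dot_ell1, dot_ell2]
  linear_combination (s * (k 1 : ℂ) / 2) * h3 - (s * (√3 : ℂ) ^ 2 * (k 1 : ℂ) / 2) * I_sq

theorem norm_Omega_kF_add_sub_le {s : ℝ} (hs : s = 1 ∨ s = -1) {k : EuclideanSpace ℝ (Fin 2)}
    (hk : ‖k‖ ≤ 1/2) :
    ‖Omega (kF s + k) - (3/2 : ℂ) * (I * (k 0 : ℝ) + (s : ℝ) * (k 1 : ℝ))‖ ≤ 6 * ‖k‖ ^ 2 := by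
  have hζ₁ : ‖(-1/2 - s * (√3 / 2) * I : ℂ)‖ = 1 := by
    rw [← exp_neg_I_mul_dot_kF_ell1 hs, norm_exp]; simp
  have hζ₂ : ‖(-1/2 + s * (√3 / 2) * I : ℂ)‖ = 1 := by
    rw [← exp_neg_I_mul_dot_kF_ell2 hs, norm_exp]; simp
  have hremainder {l : EuclideanSpace ℝ (Fin 2)} (hl : ‖l‖ = √3) :
      ‖cexp (-I * dot k l) - 1 + I * dot k l‖ ≤ 3 * ‖k‖ ^ 2 := by
    have hdot : |dot k l| ≤ √3 * ‖k‖ := by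
      simpa [hl, mul_comm] using abs_dot_le k l
    have hsqrt : √3 ≤ 2 := by
      rw [Real.sqrt_le_left (by norm_num)]; norm_num
    calc _ ≤ dot k l ^ 2 := norm_exp_neg_I_mul_sub_one_add_I_mul_le (by nlinarith [norm_nonneg k])
      _ ≤ (√3 * ‖k‖) ^ 2 := sq_le_sq' (abs_le.mp hdot).1 (abs_le.mp hdot).2
      _ = 3 * ‖k‖ ^ 2 := by rw [mul_pow, Real.sq_sqrt (by norm_num)]
  rw [Omega_kF_add_sub hs]
  calc _ ≤ _ := norm_add_le _ _
    _ ≤ 3 * ‖k‖ ^ 2 + 3 * ‖k‖ ^ 2 := by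
      rw [norm_mul, norm_mul, hζ₁, hζ₂, one_mul, one_mul]
      exact add_le_add (hremainder norm_ell1) (hremainder norm_ell2)
    _ = 6 * ‖k‖ ^ 2 := by ring

noncomputable def fermiLinearization (s : ℝ) : EuclideanSpace ℝ (Fin 2) →L[ℝ] ℂ :=
  (3/2 : ℂ) • (I • (ofRealCLM ∘L EuclideanSpace.proj 0)
    + (s : ℂ) • (ofRealCLM ∘L EuclideanSpace.proj 1))

theorem fermiLinearization_apply (s : ℝ) (k : EuclideanSpace ℝ (Fin 2)) :
    fermiLinearization s k = (3/2 : ℂ) * (I * (k 0 : ℝ) + (s : ℝ) * (k 1 : ℝ)) := by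
  simp [fermiLinearization, mul_add]

/-- `Ω` is Fréchet differentiable at the Fermi points `k_F^±`, with derivative
the ℝ-linear map `k' ↦ (3/2)(i k₁' ± k₂')`; consequently near `k_F^±` one has the quadratic
error bound `|Ω(k_F^± + k') − (3/2)(i k₁' ± k₂')| ≤ C |k'|²`: the dispersion relation is
asymptotically relativistic near the Fermi points. -/
theorem omega_differentiable_at_fermi_points (s : ℝ) (hs : s = 1 ∨ s = -1) :
    (∃ D : EuclideanSpace ℝ (Fin 2) →L[ℝ] ℂ,
      (∀ k' : EuclideanSpace ℝ (Fin 2),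
        D k' = (3/2 : ℂ) * (Complex.I * (k' 0 : ℝ) + (s : ℝ) * (k' 1 : ℝ))) ∧
      HasFDerivAt Omega D (kF s)) ∧
    (∃ C > (0:ℝ), ∃ ε > (0:ℝ), ∀ k' : EuclideanSpace ℝ (Fin 2), ‖k'‖ ≤ ε →
      ‖Omega (kF s + k')
          - (3/2 : ℂ) * (Complex.I * (k' 0 : ℝ) + (s : ℝ) * (k' 1 : ℝ))‖ ≤ C * ‖k'‖ ^ 2) := by
  refine ⟨⟨fermiLinearization s, fermiLinearization_apply s, ?_⟩,
    6, by norm_num, 1/2, by norm_num, fun k hk => norm_Omega_kF_add_sub_le hs hk⟩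
  refine hasFDerivAt_of_norm_sub_le_mul_sq (C := 6) (by norm_num : (0:ℝ) < 1/2) fun k hk => ?_
  rw [Omega_kF hs, sub_zero, fermiLinearization_apply]
  exact norm_Omega_kF_add_sub_le hs hk
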